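/- arXiv:math/9805001 — 5 statements merged into one kernel-verified Lean document; each statement's English description precedes it below -/
import Mathlib

section
/- Let h be a real number with h ≠ −k/2 for every integer k ≥ 0. If B : ℂ[z] × ℂ[z] → ℂ is a sesquilinear form (linear in the first argument, conjugate-linear in the second) satisfying B(l_i p, q) = B(p, l₋ᵢ q) for all i ∈ {−1, 0, 1} and all p, q ∈ ℂ[z], and normalized by B(1, 1) = 1, then B(z^m, zⁿ) = 0 for m ≠ n and B(zⁿ, zⁿ) = n!·(2h)(2h+1)⋯(2h+n−1) for all n ≥ 0; moreover this form B is positive definite if and only if h > 0 (the unitarizable case). -/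
open Polynomial

noncomputable section

/-- Operators (ℂ-linear endomorphisms) on ℂ[z], realized as `Polynomial ℂ`. -/
abbrev E : Type := Module.End ℂ (Polynomial ℂ)

/-- The differentiation operator `D(p) = p'`. -/
def Dop : E := Polynomial.derivative

/-- Multiplication by `z`. -/
def Mz : E := LinearMap.mulLeft ℂ (X : Polynomial ℂ)

/-- `l₋₁(p) = z·p`. -/
def lm1 : E := Mz

/-- `l₀(p) = z·p' + h·p`. -/
def l0 (h : ℝ) : E := Mz * Dop + (h : ℂ) • (1 : E)

/-- `l₁(p) = z·p'' + 2h·p'`. -/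
def l1 (h : ℝ) : E := Mz * Dop ^ 2 + ((2 * h : ℝ) : ℂ) • Dop

/-- Commutator `[A,B] = A∘B − B∘A`. -/
def opComm (A B : E) : E := A * B - B * A

/-- The weight `w h n = n!·(2h)(2h+1)⋯(2h+n−1)`, i.e. the squared norm `⟨zⁿ, zⁿ⟩`
in the unitarizable Verma module. -/
def w (h : ℝ) (n : ℕ) : ℝ := (n.factorial : ℝ) * ∏ i ∈ Finset.range n, (2 * h + (i : ℝ))

/-!
On monomials `l₀` acts diagonally, `l₀ zⁿ = (n + h) zⁿ`, with real and pairwise distinct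
eigenvalues, so `l₀`-invariance forces the monomials to be `B`-orthogonal. The relation
`B(zⁿ⁺¹, zⁿ⁺¹) = B(l₋₁ zⁿ, zⁿ⁺¹) = B(zⁿ, l₁ zⁿ⁺¹) = (n + 1)(n + 2h) B(zⁿ, zⁿ)` then determines the
diagonal from `B(1, 1) = 1`. Hence `B(p, p) = ∑ |pₙ|² w h n`, which is positive for `p ≠ 0` when
`h > 0`, while `B(z, z) = 2h` shows that positivity forces `h > 0`.
-/
lemma lm1_X_pow (n : ℕ) : lm1 (X ^ n : ℂ[X]) = X ^ (n + 1) := by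
  simp [lm1, Mz, pow_succ, mul_comm]

lemma l0_X_pow (h : ℝ) (n : ℕ) : l0 h (X ^ n : ℂ[X]) = ((n + h : ℝ) : ℂ) • X ^ n := by
  cases n with
  | zero => simp [l0, Mz, Dop]
  | succ m =>
    simp [l0, Mz, Dop, Module.End.mul_apply, smul_eq_C_mul]
    ring

lemma l1_X_pow_succ (h : ℝ) (n : ℕ) :
    l1 h (X ^ (n + 1) : ℂ[X]) = (((n + 1) * (n + 2 * h) : ℝ) : ℂ) • X ^ n := by
  cases n with
  | zero => simp [l1, Mz, Dop, Module.End.mul_apply, pow_two]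
  | succ m =>
    simp [l1, Mz, Dop, Module.End.mul_apply, pow_two, smul_eq_C_mul]
    ring

lemma w_zero (h : ℝ) : w h 0 = 1 := by
  simp [w]

lemma w_one (h : ℝ) : w h 1 = 2 * h := by
  simp [w]

lemma w_succ (h : ℝ) (n : ℕ) : w h (n + 1) = (n + 1) * (n + 2 * h) * w h n := by
  simp only [w, Finset.prod_range_succ, Nat.factorial_succ]
  push_cast
  ring

lemma w_pos {h : ℝ} (hh : 0 < h) (n : ℕ) : 0 < w h n :=
  mul_pos (mod_cast n.factorial_pos) (Finset.prod_pos fun _ _ => by positivity)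

lemma sesq_eq_zero_of_apply_eq_smul {K M : Type*} [Field K] [StarRing K] [AddCommGroup M]
    [Module K M] {B : M →ₗ[K] M →ₗ⋆[K] K} {T : Module.End K M}
    (hT : ∀ x y, B (T x) y = B x (T y)) {x y : M} {a b : K}
    (hx : T x = a • x) (hy : T y = b • y) (hb : star b = b) (hab : a ≠ b) : B x y = 0 := by
  have : a = b ∨ B x y = 0 := by
    simpa [hx, hy, starRingEnd_apply, hb] using hT x y
  exact this.resolve_left hab

lemma sesq_self_eq_sum_of_orthogonal {R : Type*} [CommSemiring R] [StarRing R]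
    (B : R[X] →ₗ[R] R[X] →ₗ⋆[R] R) (hB : ∀ m n : ℕ, m ≠ n → B (X ^ m) (X ^ n) = 0)
    (p : R[X]) :
    B p p = ∑ n ∈ p.support, p.coeff n * star (p.coeff n) * B (X ^ n) (X ^ n) := by
  have hp : p = ∑ n ∈ p.support, p.coeff n • X ^ n := by
    simpa only [smul_eq_C_mul] using p.as_sum_support_C_mul_X_pow
  conv_lhs => rw [hp]
  simp only [map_sum, map_smul, map_smulₛₗ, LinearMap.sum_apply, LinearMap.smul_apply]
  refine Finset.sum_congr rfl fun m hm => ?_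
  rw [Finset.sum_eq_single m (fun n _ hnm => by rw [hB n m hnm, smul_zero])
    (fun hm' => absurd hm hm')]
  simp only [smul_eq_mul, starRingEnd_apply]
  ring

section InvariantForm

variable {h : ℝ} (B : ℂ[X] →ₗ[ℂ] ℂ[X] →ₗ⋆[ℂ] ℂ)

lemma invariantForm_X_pow_eq_zero_of_ne (hB_0 : ∀ p q, B (l0 h p) q = B p (l0 h q))
    {m n : ℕ} (hmn : m ≠ n) : B (X ^ m) (X ^ n) = 0 :=
  sesq_eq_zero_of_apply_eq_smul hB_0 (l0_X_pow h m) (l0_X_pow h n) (Complex.conj_ofReal _)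
    (by simpa using hmn)

lemma invariantForm_X_pow_self (hB_m1 : ∀ p q, B (lm1 p) q = B p (l1 h q)) (hB_norm : B 1 1 = 1)
    (n : ℕ) : B (X ^ n) (X ^ n) = w h n := by
  induction n with
  | zero => simpa [w_zero] using hB_norm
  | succ n ih =>
    nth_rw 1 [← lm1_X_pow n]
    rw [hB_m1, l1_X_pow_succ, map_smulₛₗ, Complex.conj_ofReal, ih, w_succ]
    simp

lemma invariantForm_self_eq_sum (hB_0 : ∀ p q, B (l0 h p) q = B p (l0 h q))
    (hB_m1 : ∀ p q, B (lm1 p) q = B p (l1 h q)) (hB_norm : B 1 1 = 1) (p : ℂ[X]) :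
    B p p = ((∑ n ∈ p.support, Complex.normSq (p.coeff n) * w h n : ℝ) : ℂ) := by
  rw [sesq_self_eq_sum_of_orthogonal B (fun m n => invariantForm_X_pow_eq_zero_of_ne B hB_0)]
  push_cast
  refine Finset.sum_congr rfl fun n _ => ?_
  rw [invariantForm_X_pow_self B hB_m1 hB_norm, ← Complex.mul_conj, Complex.star_def]

end InvariantForm

theorem stmt_4_general (h : ℝ)
    (B : Polynomial ℂ → Polynomial ℂ → ℂ)
    (hB_addl : ∀ p q r : Polynomial ℂ, B (p + q) r = B p r + B q r)
    (hB_smull : ∀ (a : ℂ) (p q : Polynomial ℂ), B (a • p) q = a * B p q)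
    (hB_addr : ∀ p q r : Polynomial ℂ, B p (q + r) = B p q + B p r)
    (hB_smulr : ∀ (a : ℂ) (p q : Polynomial ℂ), B p (a • q) = (starRingEnd ℂ) a * B p q)
    (hB_m1 : ∀ p q : Polynomial ℂ, B (lm1 p) q = B p (l1 h q))
    (hB_0 : ∀ p q : Polynomial ℂ, B (l0 h p) q = B p (l0 h q))
    (hB_norm : B 1 1 = 1) :
    (∀ m n : ℕ, m ≠ n → B (X ^ m) (X ^ n) = 0) ∧
    (∀ n : ℕ, B (X ^ n) (X ^ n) = ((w h n : ℝ) : ℂ)) ∧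
    ((∀ p : Polynomial ℂ, p ≠ 0 → 0 < (B p p).re ∧ (B p p).im = 0) ↔ 0 < h) := by
  let Bₛ : ℂ[X] →ₗ[ℂ] ℂ[X] →ₗ⋆[ℂ] ℂ :=
    LinearMap.mk₂'ₛₗ (RingHom.id ℂ) (starRingEnd ℂ) B hB_addl hB_smull hB_addr hB_smulr
  refine ⟨fun m n => invariantForm_X_pow_eq_zero_of_ne Bₛ hB_0,
    invariantForm_X_pow_self Bₛ hB_m1 hB_norm, ⟨fun hpos => ?_, fun hh p hp => ?_⟩⟩
  · have hX := (hpos X X_ne_zero).1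
    rw [show B X X = Bₛ (X ^ 1) (X ^ 1) by simp [Bₛ], invariantForm_X_pow_self Bₛ hB_m1 hB_norm,
      w_one, Complex.ofReal_re] at hX
    linarith
  · rw [show B p p = Bₛ p p from rfl, invariantForm_self_eq_sum Bₛ hB_0 hB_m1 hB_norm,
      Complex.ofReal_re, Complex.ofReal_im]
    refine ⟨Finset.sum_pos (fun n hn => ?_) (support_nonempty.2 hp), rfl⟩
    exact mul_pos (Complex.normSq_pos.2 (mem_support_iff.1 hn)) (w_pos hh n)

/-- For nondegenerate extremal weight `h`, any sesquilinear form `B` on `ℂ[z]`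
(linear in the first, conjugate-linear in the second argument) with `B(lᵢ p, q) = B(p, l₋ᵢ q)`
for `i ∈ {−1,0,1}` and `B(1,1) = 1` satisfies `B(z^m, zⁿ) = 0` for `m ≠ n` and
`B(zⁿ, zⁿ) = n!(2h)(2h+1)⋯(2h+n−1)`; moreover `B` is positive definite iff `h > 0`. -/
theorem stmt_4 (h : ℝ) (hh : ∀ k : ℕ, h ≠ -(k : ℝ) / 2)
    (B : Polynomial ℂ → Polynomial ℂ → ℂ)
    (hB_addl : ∀ p q r : Polynomial ℂ, B (p + q) r = B p r + B q r)
    (hB_smull : ∀ (a : ℂ) (p q : Polynomial ℂ), B (a • p) q = a * B p q)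
    (hB_addr : ∀ p q r : Polynomial ℂ, B p (q + r) = B p q + B p r)
    (hB_smulr : ∀ (a : ℂ) (p q : Polynomial ℂ), B p (a • q) = (starRingEnd ℂ) a * B p q)
    (hB_m1 : ∀ p q : Polynomial ℂ, B (lm1 p) q = B p (l1 h q))
    (hB_0 : ∀ p q : Polynomial ℂ, B (l0 h p) q = B p (l0 h q))
    (hB_1 : ∀ p q : Polynomial ℂ, B (l1 h p) q = B p (lm1 q))
    (hB_norm : B 1 1 = 1) :
    (∀ m n : ℕ, m ≠ n → B (X ^ m) (X ^ n) = 0) ∧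
    (∀ n : ℕ, B (X ^ n) (X ^ n) = ((w h n : ℝ) : ℂ)) ∧
    ((∀ p : Polynomial ℂ, p ≠ 0 → 0 < (B p p).re ∧ (B p p).im = 0) ↔ 0 < h) :=
  stmt_4_general h B hB_addl hB_smull hB_addr hB_smulr hB_m1 hB_0 hB_norm

end
end

section
/- Let h be a real number with h ≠ −k/2 for every integer k ≥ 0. Suppose M_n (n ∈ ℤ) is any family of ℂ-linear endomorphisms of ℂ[z] such that M₋₁ = l₋₁, M₀ = l₀, M₁ = l₁, and [l_i, M_n] = (i − n)·M_{i+n} for every i ∈ {−1, 0, 1} and every n ∈ ℤ. Then M_n = L_n for all n ∈ ℤ (uniqueness of the q_R-conformal symmetries). -/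
open Polynomial

noncomputable section

/-!
The relation with `l₁` (resp. `l₋₁`) determines `Mₙ₊₁` from `Mₙ` for `n ≥ 2` (resp. `Mₙ₋₁` for
`n ≤ -2`), and `L` obeys the same recursions, so everything reduces to `n = ±2`. By the relation
with `l₀`, `M₂ - L₂` lowers degrees by `2`; it also commutes with multiplication by `z`, so it
kills `1` and hence all of `ℂ[z]`. Likewise `M₋₂ - L₋₂` raises degrees by `2` and commutes with
`l₁`; since `l₁ zⁿ⁺¹ = (n + 1)(n + 2h) zⁿ` with `n + 2h ≠ 0`, it vanishes by induction on the
degree. For `k ≥ 0` the identities needed for `L` follow from `[Dᵃ, z] = a Dᵃ⁻¹`, which makes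
`Lₖ = z Dᵏ⁺¹ + (k + 1) h Dᵏ` satisfy the Witt relations `[Lᵢ, Lₖ] = (i - k) Lᵢ₊ₖ`; for `k < 0`
they are identities between the coefficients of `L` on monomials.
-/

lemma Mz_apply (p : ℂ[X]) : Mz p = X * p := rfl

lemma ext_X_pow {f g : E} (hfg : ∀ n : ℕ, f (X ^ n) = g (X ^ n)) : f = g :=
  (basisMonomials ℂ).ext fun n => by
    simpa [coe_basisMonomials, monomial_one_right_eq_X_pow] using hfg n

lemma opComm_sub (A B C : E) : opComm A (B - C) = opComm A B - opComm A C := by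
  simp only [opComm, mul_sub, sub_mul]
  abel

lemma Dop_mul_Mz : Dop * Mz = Mz * Dop + 1 := by
  refine LinearMap.ext fun p => ?_
  simp [Dop, Mz, derivative_mul, add_comm]

lemma Dop_pow_succ_mul_Mz (a : ℕ) :
    Dop ^ (a + 1) * Mz = Mz * Dop ^ (a + 1) + ((a : ℂ) + 1) • Dop ^ a := by
  induction a with
  | zero => simpa using Dop_mul_Mz
  | succ a ih =>
    rw [pow_succ' Dop (a + 1), mul_assoc, ih, mul_add, ← mul_assoc, Dop_mul_Mz, mul_smul_comm,
      ← pow_succ', add_mul, one_mul, mul_assoc, ← pow_succ']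
    push_cast
    module

lemma Dop_pow_mul_Mz_mul_Dop_pow_succ (a b : ℕ) :
    Dop ^ a * (Mz * Dop ^ (b + 1)) = Mz * Dop ^ (a + b + 1) + (a : ℂ) • Dop ^ (a + b) := by
  cases a with
  | zero => simp
  | succ a =>
    rw [← mul_assoc, Dop_pow_succ_mul_Mz, add_mul, smul_mul_assoc, mul_assoc, ← pow_add,
      ← pow_add, show a + 1 + (b + 1) = a + 1 + b + 1 by omega,
      show a + (b + 1) = a + 1 + b by omega]
    push_cast
    rfl

def Lpos (h : ℝ) (k : ℕ) : E := Mz * Dop ^ (k + 1) + (((k : ℂ) + 1) * (h : ℂ)) • Dop ^ k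

lemma l0_eq_Lpos_zero (h : ℝ) : l0 h = Lpos h 0 := by
  simp [l0, Lpos]

lemma l1_eq_Lpos_one (h : ℝ) : l1 h = Lpos h 1 := by
  simp only [l1, Lpos, pow_one]
  push_cast
  ring_nf

lemma opComm_Lpos_Lpos (h : ℝ) (i k : ℕ) :
    opComm (Lpos h i) (Lpos h k) = ((i : ℂ) - k) • Lpos h (i + k) := by
  simp only [Lpos, opComm, add_mul, mul_add, smul_mul_assoc, mul_smul_comm, mul_assoc,
    ← pow_add, Dop_pow_mul_Mz_mul_Dop_pow_succ]
  rw [show i + 1 + k = i + k + 1 by omega, show k + 1 + i = i + k + 1 by omega, Nat.add_comm k i]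
  push_cast
  module

lemma opComm_lm1_Lpos_succ (h : ℝ) (k : ℕ) :
    opComm lm1 (Lpos h (k + 1)) = -((k : ℂ) + 2) • Lpos h k := by
  simp only [lm1, Lpos, opComm, add_mul, mul_add, smul_mul_assoc, mul_smul_comm,
    mul_assoc, Dop_pow_succ_mul_Mz]
  push_cast
  module

lemma natCast_add_two_mul_ne_zero {h : ℝ} (hh : ∀ k : ℕ, h ≠ -(k : ℝ) / 2) (n : ℕ) :
    (n : ℂ) + 2 * (h : ℂ) ≠ 0 := by
  have : (n : ℝ) + 2 * h ≠ 0 := fun H => hh n (by linarith)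
  exact_mod_cast this

lemma coeff_l0 (h : ℝ) (p : ℂ[X]) (j : ℕ) : (l0 h p).coeff j = ((j : ℂ) + h) * p.coeff j := by
  change (X * derivative p + (h : ℂ) • p).coeff j = _
  cases j with
  | zero => simp
  | succ j =>
    rw [coeff_add, coeff_X_mul, coeff_derivative, coeff_smul, smul_eq_mul]
    push_cast
    ring

lemma l0_apply_X_pow (h : ℝ) (n : ℕ) : l0 h (X ^ n) = ((n : ℂ) + h) • X ^ n := by
  ext j
  rw [coeff_l0, coeff_smul, coeff_X_pow, smul_eq_mul]
  split_ifs with hj <;> simp [hj]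

lemma coeff_l1 (h : ℝ) (p : ℂ[X]) (j : ℕ) :
    (l1 h p).coeff j = ((j : ℂ) + 1) * (j + 2 * h) * p.coeff (j + 1) := by
  change (X * derivative (derivative p) + ((2 * h : ℝ) : ℂ) • derivative p).coeff j = _
  cases j with
  | zero => simp [coeff_derivative]
  | succ j =>
    rw [coeff_add, coeff_X_mul, coeff_derivative, coeff_derivative, coeff_smul, coeff_derivative,
      smul_eq_mul]
    push_cast
    ring

lemma l1_apply_one (h : ℝ) : l1 h 1 = 0 := by
  ext j
  simp [coeff_l1, coeff_one]

lemma l1_apply_X_pow_succ (h : ℝ) (n : ℕ) :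
    l1 h (X ^ (n + 1)) = (((n : ℂ) + 1) * (n + 2 * h)) • X ^ n := by
  ext j
  rw [coeff_l1, coeff_smul, coeff_X_pow, coeff_X_pow, smul_eq_mul]
  split_ifs with hj hj' hj' <;> first | omega | simp [hj']

lemma coeff_eq_zero_of_opComm_l0 (h : ℝ) {A : E} {c : ℂ} (hA : opComm (l0 h) A = c • A)
    (n j : ℕ) (hj : (j : ℂ) ≠ n + c) : (A (X ^ n)).coeff j = 0 := by
  have hcoeff := congrArg (fun B : E => (B (X ^ n)).coeff j) hA
  simp only [opComm, LinearMap.sub_apply, Module.End.mul_apply, LinearMap.smul_apply,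
    l0_apply_X_pow, map_smul, coeff_sub, coeff_l0, coeff_smul, smul_eq_mul] at hcoeff
  have : ((j : ℂ) - (n + c)) * (A (X ^ n)).coeff j = 0 := by linear_combination hcoeff
  exact (mul_eq_zero.mp this).resolve_left (sub_ne_zero.mpr hj)

lemma eq_zero_of_opComm_lm1_eq_zero (h : ℝ) {A : E} {c : ℂ} (hc : ∀ j : ℕ, (j : ℂ) ≠ c)
    (h1 : opComm lm1 A = 0) (h0 : opComm (l0 h) A = c • A) : A = 0 := by
  have hA1 : A 1 = 0 := by
    ext j
    simpa using coeff_eq_zero_of_opComm_l0 h h0 0 j (by simpa using hc j)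
  have hcomm (p : ℂ[X]) : X * A p = A (X * p) := by
    simpa [opComm, lm1, Mz_apply, sub_eq_zero] using LinearMap.congr_fun h1 p
  refine ext_X_pow fun n => ?_
  rw [LinearMap.zero_apply]
  induction n with
  | zero => rwa [pow_zero]
  | succ n ih => rw [pow_succ', ← hcomm, ih, mul_zero]

lemma eq_zero_of_opComm_l1_eq_zero {h : ℝ} (hh : ∀ k : ℕ, h ≠ -(k : ℝ) / 2) {A : E} (k : ℕ)
    (h1 : opComm (l1 h) A = 0) (h0 : opComm (l0 h) A = ((k : ℂ) + 1) • A) : A = 0 := by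
  have hshift (n : ℕ) : A (X ^ n) = (A (X ^ n)).coeff (n + k + 1) • X ^ (n + k + 1) := by
    ext j
    rw [coeff_smul, coeff_X_pow, smul_eq_mul]
    split_ifs with hj
    · rw [hj, mul_one]
    · rw [mul_zero]
      refine coeff_eq_zero_of_opComm_l0 h h0 n j fun H => hj ?_
      exact_mod_cast (show (j : ℂ) = ((n + k + 1 : ℕ) : ℂ) by push_cast; linear_combination H)
  have hcomm (p : ℂ[X]) : l1 h (A p) = A (l1 h p) := by
    simpa [opComm, sub_eq_zero] using LinearMap.congr_fun h1 p
  have hkill (n : ℕ) (hn : l1 h (A (X ^ n)) = 0) : A (X ^ n) = 0 := by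
    rw [hshift n, map_smul, l1_apply_X_pow_succ, smul_smul, smul_eq_zero] at hn
    have hne : ((n + k : ℕ) + 1 : ℂ) * ((n + k : ℕ) + 2 * h) ≠ 0 :=
      mul_ne_zero (Nat.cast_add_one_ne_zero _) (natCast_add_two_mul_ne_zero hh _)
    rw [hshift n, (mul_eq_zero.mp (hn.resolve_right (pow_ne_zero _ X_ne_zero))).resolve_right hne,
      zero_smul]
  refine ext_X_pow fun n => ?_
  rw [LinearMap.zero_apply]
  induction n with
  | zero => exact hkill 0 (by rw [pow_zero, hcomm, l1_apply_one, map_zero])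
  | succ n ih => exact hkill (n + 1) (by rw [hcomm, l1_apply_X_pow_succ, map_smul, ih, smul_zero])

/-- `L₋ₖ zⁿ = negCoeff h k n • zⁿ⁺ᵏ`. -/
def negCoeff (h : ℝ) (k n : ℕ) : ℂ :=
  ((n : ℂ) + ((k : ℂ) + 1) * (h : ℂ)) / ∏ i ∈ Finset.range k, ((n : ℂ) + 2 * h + (i : ℂ))

lemma prod_natCast_add_two_mul_ne_zero {h : ℝ} (hh : ∀ k : ℕ, h ≠ -(k : ℝ) / 2) (n k : ℕ) :
    ∏ i ∈ Finset.range k, ((n : ℂ) + 2 * h + (i : ℂ)) ≠ 0 :=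
  Finset.prod_ne_zero_iff.mpr fun i _ => by
    simpa [add_right_comm] using natCast_add_two_mul_ne_zero hh (n + i)

lemma negCoeff_one {h : ℝ} (hh : ∀ k : ℕ, h ≠ -(k : ℝ) / 2) (n : ℕ) : negCoeff h 1 n = 1 := by
  rw [negCoeff, Finset.prod_range_one]
  push_cast
  rw [one_add_one_eq_two, add_zero]
  exact div_self (natCast_add_two_mul_ne_zero hh n)

lemma negCoeff_sub_negCoeff_succ {h : ℝ} (hh : ∀ k : ℕ, h ≠ -(k : ℝ) / 2) (k m : ℕ) :
    negCoeff h k m - negCoeff h k (m + 1) = ((k : ℂ) - 1) * negCoeff h (k + 1) m := by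
  have hQ := prod_natCast_add_two_mul_ne_zero hh m k
  have hQ' := prod_natCast_add_two_mul_ne_zero hh (m + 1) k
  have hmk : (m : ℂ) + 2 * h + k ≠ 0 := by
    simpa [add_right_comm] using natCast_add_two_mul_ne_zero hh (m + k)
  have hsucc : ∏ i ∈ Finset.range (k + 1), ((m : ℂ) + 2 * h + i)
      = (∏ i ∈ Finset.range k, ((m : ℂ) + 2 * h + i)) * ((m : ℂ) + 2 * h + k) :=
    Finset.prod_range_succ _ k
  have hsucc' : ∏ i ∈ Finset.range (k + 1), ((m : ℂ) + 2 * h + i)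
      = ((m : ℂ) + 2 * h) * ∏ i ∈ Finset.range k, (((m + 1 : ℕ) : ℂ) + 2 * h + i) := by
    rw [Finset.prod_range_succ', mul_comm]
    push_cast
    simp only [add_assoc, add_comm (1 : ℂ), add_zero]
  simp only [negCoeff]
  rw [hsucc]
  push_cast at hsucc' hQ' ⊢
  rw [div_sub_div _ _ hQ hQ', ← mul_div_assoc, div_eq_div_iff (mul_ne_zero hQ hQ')
    (mul_ne_zero hQ hmk)]
  linear_combination (-((m : ℂ) + 1 + ((k : ℂ) + 1) * h) * ∏ i ∈ Finset.range k,
    ((m : ℂ) + 2 * h + i)) * (hsucc.symm.trans hsucc')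

lemma opComm_l0_eq_smul_of_apply_X_pow (h : ℝ) {A : E} {k : ℕ} {a : ℕ → ℂ}
    (hA : ∀ n, A (X ^ n) = a n • X ^ (n + k)) : opComm (l0 h) A = (k : ℂ) • A := by
  refine ext_X_pow fun n => ?_
  simp only [opComm, LinearMap.sub_apply, Module.End.mul_apply, LinearMap.smul_apply, hA,
    l0_apply_X_pow, map_smul, smul_smul, ← sub_smul]
  push_cast
  ring_nf

lemma opComm_lm1_apply_X_pow_of_apply_X_pow {A : E} {k : ℕ} {a : ℕ → ℂ}
    (hA : ∀ n, A (X ^ n) = a n • X ^ (n + k)) (n : ℕ) :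
    opComm lm1 A (X ^ n) = (a n - a (n + 1)) • X ^ (n + k + 1) := by
  simp only [opComm, LinearMap.sub_apply, Module.End.mul_apply, lm1, Mz_apply, hA, ← pow_succ',
    map_smul, sub_smul]
  ring_nf

lemma eq_lm1_of_apply_X_pow {h : ℝ} (hh : ∀ k : ℕ, h ≠ -(k : ℝ) / 2) {A : E}
    (hA : ∀ n, A (X ^ n) = negCoeff h 1 n • X ^ (n + 1)) : A = lm1 :=
  ext_X_pow fun n => by rw [hA, negCoeff_one hh, one_smul, lm1, Mz_apply, pow_succ']

lemma opComm_lm1_eq_smul_of_apply_X_pow {h : ℝ} (hh : ∀ k : ℕ, h ≠ -(k : ℝ) / 2) {A B : E}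
    {k : ℕ} (hA : ∀ n, A (X ^ n) = negCoeff h k n • X ^ (n + k))
    (hB : ∀ n, B (X ^ n) = negCoeff h (k + 1) n • X ^ (n + (k + 1))) :
    opComm lm1 A = ((k : ℂ) - 1) • B :=
  ext_X_pow fun n => by
    rw [opComm_lm1_apply_X_pow_of_apply_X_pow hA, negCoeff_sub_negCoeff_succ hh,
      LinearMap.smul_apply, hB, smul_smul, add_assoc]

lemma opComm_l1_eq_smul_lm1 {h : ℝ} (hh : ∀ k : ℕ, h ≠ -(k : ℝ) / 2) {A : E}
    (hA : ∀ n, A (X ^ n) = negCoeff h 2 n • X ^ (n + 2)) : opComm (l1 h) A = (3 : ℂ) • lm1 := by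
  have hne (n : ℕ) : (n : ℂ) + 2 * h ≠ 0 := natCast_add_two_mul_ne_zero hh n
  have hne' (n : ℕ) : (n : ℂ) + 2 * h + 1 ≠ 0 := by
    simpa [add_right_comm] using natCast_add_two_mul_ne_zero hh (n + 1)
  refine ext_X_pow fun n => ?_
  simp only [opComm, LinearMap.sub_apply, Module.End.mul_apply, LinearMap.smul_apply, lm1,
    Mz_apply, ← pow_succ', hA]
  cases n with
  | zero =>
    rw [pow_zero, l1_apply_one, map_zero, sub_zero, map_smul, show 0 + 2 = 1 + 1 from rfl,
      l1_apply_X_pow_succ, smul_smul]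
    congr 1
    have hd := mul_ne_zero (hne 0) (hne' 0)
    simp only [negCoeff, Finset.prod_range_succ, Finset.prod_range_zero]
    push_cast at hd ⊢
    simp only [zero_add, add_zero, one_mul] at hd ⊢
    rw [div_mul_eq_mul_div, div_eq_iff hd]
    ring
  | succ j =>
    rw [map_smul, l1_apply_X_pow_succ, l1_apply_X_pow_succ, map_smul, hA, smul_smul, smul_smul,
      ← sub_smul]
    congr 1
    have hd := mul_ne_zero (hne (j + 1)) (hne' (j + 1))
    have hd' := mul_ne_zero (hne j) (hne' j)
    simp only [negCoeff, Finset.prod_range_succ, Finset.prod_range_zero]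
    push_cast at hd ⊢
    simp only [add_zero, one_mul]
    rw [div_mul_eq_mul_div, mul_div_assoc', div_sub_div _ _ hd hd', div_eq_iff (mul_ne_zero hd hd')]
    ring

lemma eq_Lpos_of_opComm (h : ℝ) {M : ℤ → E} (hM1 : M 1 = l1 h)
    (hlm1 : ∀ n : ℤ, opComm lm1 (M n) = ((-1 - n : ℤ) : ℂ) • M (-1 + n))
    (hl0 : ∀ n : ℤ, opComm (l0 h) (M n) = ((-n : ℤ) : ℂ) • M n)
    (hl1 : ∀ n : ℤ, opComm (l1 h) (M n) = ((1 - n : ℤ) : ℂ) • M (1 + n))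
    (k : ℕ) (hk : 1 ≤ k) : M k = Lpos h k := by
  have hM2 : M 2 = Lpos h 2 := by
    refine sub_eq_zero.mp (eq_zero_of_opComm_lm1_eq_zero h (c := -2)
      (fun j => by exact_mod_cast (by omega : (j : ℤ) ≠ -2)) ?_ ?_)
    · rw [opComm_sub, hlm1, opComm_lm1_Lpos_succ h 1, ← l1_eq_Lpos_one, ← hM1]
      norm_num
    · rw [opComm_sub, hl0, l0_eq_Lpos_zero, opComm_Lpos_Lpos, smul_sub]
      push_cast
      module
  induction k, hk using Nat.le_induction with
  | base => simpa [l1_eq_Lpos_one] using hM1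
  | succ k hk ih =>
    rcases hk.eq_or_lt with rfl | hk
    · exact hM2
    have hc : (1 : ℂ) - k ≠ 0 := by
      rw [sub_ne_zero]
      exact_mod_cast hk.ne
    have hrec := hl1 k
    rw [ih, l1_eq_Lpos_one, opComm_Lpos_Lpos] at hrec
    push_cast at hrec ⊢
    rw [add_comm 1 k, add_comm 1 (k : ℤ)] at hrec
    exact (smul_right_injective E hc hrec).symm

lemma eq_at_neg_of_opComm {h : ℝ} (hh : ∀ k : ℕ, h ≠ -(k : ℝ) / 2) {M L : ℤ → E}
    (hMm1 : M (-1) = lm1)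
    (hL : ∀ k : ℕ, 1 ≤ k → ∀ n : ℕ, L (-(k : ℤ)) (X ^ n) = negCoeff h k n • X ^ (n + k))
    (hlm1 : ∀ n : ℤ, opComm lm1 (M n) = ((-1 - n : ℤ) : ℂ) • M (-1 + n))
    (hl0 : ∀ n : ℤ, opComm (l0 h) (M n) = ((-n : ℤ) : ℂ) • M n)
    (hl1 : ∀ n : ℤ, opComm (l1 h) (M n) = ((1 - n : ℤ) : ℂ) • M (1 + n))
    (k : ℕ) (hk : 1 ≤ k) : M (-k) = L (-k) := by
  have hL2 : ∀ n, L (-2) (X ^ n) = negCoeff h 2 n • X ^ (n + 2) := hL 2 (by norm_num)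
  have hM2 : M (-2) = L (-2) := by
    refine sub_eq_zero.mp (eq_zero_of_opComm_l1_eq_zero hh 1 ?_ ?_)
    · rw [opComm_sub, hl1, opComm_l1_eq_smul_lm1 hh hL2, ← hMm1]
      norm_num
    · rw [opComm_sub, hl0, opComm_l0_eq_smul_of_apply_X_pow h hL2, smul_sub]
      push_cast
      module
  induction k, hk using Nat.le_induction with
  | base => exact hMm1.trans (eq_lm1_of_apply_X_pow hh (hL 1 le_rfl)).symm
  | succ k hk ih =>
    rcases hk.eq_or_lt with rfl | hk
    · exact hM2
    have hc : (k : ℂ) - 1 ≠ 0 := by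
      rw [sub_ne_zero]
      exact_mod_cast hk.ne'
    have hrec := hlm1 (-k)
    rw [ih, opComm_lm1_eq_smul_of_apply_X_pow hh (hL k hk.le) (hL (k + 1) (by omega)),
      show (-1 - -(k : ℤ) : ℤ) = ((k - 1 : ℕ) : ℤ) by omega] at hrec
    push_cast [Nat.cast_sub hk.le] at hrec ⊢
    rw [show -1 + -(k : ℤ) = -(k + 1) by ring] at hrec
    exact smul_right_injective E hc hrec.symm

/-- Uniqueness of the q_R-conformal symmetries: any family `Mₙ` of endomorphisms
of `ℂ[z]` with `M₋₁ = l₋₁`, `M₀ = l₀`, `M₁ = l₁` and `[lᵢ, Mₙ] = (i − n)·M_{i+n}` for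
`i ∈ {−1,0,1}`, `n ∈ ℤ`, coincides with `Lₙ`. -/
theorem stmt_6 (h : ℝ) (hh : ∀ k : ℕ, h ≠ -(k : ℝ) / 2)
    (L : ℤ → E)
    (hLpos : ∀ k : ℕ, L (k : ℤ) = Mz * Dop ^ (k + 1) + (((k : ℂ) + 1) * (h : ℂ)) • Dop ^ k)
    (hLneg : ∀ k : ℕ, 1 ≤ k → ∀ n : ℕ,
      L (-(k : ℤ)) (X ^ n) =
        (((n : ℂ) + ((k : ℂ) + 1) * (h : ℂ)) /
            ∏ i ∈ Finset.range k, ((n : ℂ) + 2 * h + (i : ℂ))) • X ^ (n + k))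
    (M : ℤ → E)
    (hMm1 : M (-1) = lm1) (hM0 : M 0 = l0 h) (hM1 : M 1 = l1 h)
    (hMrel : ∀ n : ℤ,
      opComm lm1 (M n) = ((-1 - n : ℤ) : ℂ) • M (-1 + n) ∧
      opComm (l0 h) (M n) = ((-n : ℤ) : ℂ) • M n ∧
      opComm (l1 h) (M n) = ((1 - n : ℤ) : ℂ) • M (1 + n)) :
    ∀ n : ℤ, M n = L n := by
  have hlm1 := fun n => (hMrel n).1
  have hl0 := fun n => (hMrel n).2.1
  have hl1 := fun n => (hMrel n).2.2
  have hL0 : M 0 = L 0 := by rw [hM0, l0_eq_Lpos_zero]; exact (hLpos 0).symm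
  intro n
  obtain ⟨k, rfl | rfl⟩ := Int.eq_nat_or_neg n
  · rcases Nat.eq_zero_or_pos k with rfl | hk
    · exact hL0
    · rw [hLpos k]
      exact eq_Lpos_of_opComm h hM1 hlm1 hl0 hl1 k hk
  · rcases Nat.eq_zero_or_pos k with rfl | hk
    · simpa using hL0
    · exact eq_at_neg_of_opComm hh hMm1 hLneg hlm1 hl0 hl1 k hk

end
end

section
/- Let h be a real number with h ≠ −k/2 for every integer k ≥ 0. Then for every integer n ≥ −1 and every polynomial f ∈ ℂ[X], the q_R-conformal symmetries satisfy the commutation relation [L₋ₙ, f(F)] = F^{n+1}∘f'(F) on ℂ[z], where f(F) denotes the operator obtained by substituting F into f (equivalently, [L₋ₙ, F^k] = k·F^{n+k} for all k ≥ 0). -/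
/-!
Let `Pₖ(n) = (n+2h)(n+2h+1)⋯(n+2h+k−1)`, so that `Fᵏ(zⁿ) = zⁿ⁺ᵏ / Pₖ(n)`. On monomials one
checks `[L₁, F] = 1` and `[L₋ₖ, F] = Fᵏ⁺¹` for `k ≥ 0`: the two terms of `[L₋ₖ, F](zⁿ)` have the
common denominator `Pₖ₊₁(n)`, and their numerators `n + 1 + (k+1)h` and `n + (k+1)h` differ by `1`.
Hence `[L₋ₙ, F] = Fⁿ⁺¹` commutes with `F`, and for any `A` whose commutator with `F` commutes
with `F`, the map `[A, ·]` acts on polynomials in `F` as `[A, F]` times the formal derivative.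
-/

open Polynomial

noncomputable section

theorem commutator_aeval_eq_mul_aeval_derivative {R A : Type*} [CommSemiring R] [Ring A]
    [Algebra R A] {a x : A} (hx : Commute x (a * x - x * a)) (f : R[X]) :
    a * aeval x f - aeval x f * a = (a * x - x * a) * aeval x (derivative f) := by
  induction f using Polynomial.induction_on with
  | C c => simp [Algebra.commutes]
  | add p q hp hq =>
    simp only [map_add, mul_add, add_mul]
    rw [← hp, ← hq]
    abel
  | monomial n c ih =>
    have hmul : C c * X ^ (n + 1) = X * (C c * X ^ n) := by ring
    rw [hmul, derivative_mul, derivative_X, one_mul, map_add, map_mul (aeval x) X,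
      map_mul (aeval x) X, aeval_X]
    calc a * (x * aeval x (C c * X ^ n)) - x * aeval x (C c * X ^ n) * a
        = (a * x - x * a) * aeval x (C c * X ^ n)
          + x * (a * aeval x (C c * X ^ n) - aeval x (C c * X ^ n) * a) := by noncomm_ring
      _ = (a * x - x * a) * (aeval x (C c * X ^ n) + x * aeval x (derivative (C c * X ^ n))) := by
        rw [ih, ← mul_assoc, hx.eq]
        noncomm_ring

theorem Polynomial.linearMap_ext_X_pow {R M : Type*} [Semiring R] [AddCommMonoid M] [Module R M]
    {f g : R[X] →ₗ[R] M} (h : ∀ n : ℕ, f (X ^ n) = g (X ^ n)) : f = g :=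
  (basisMonomials R).ext fun n => by
    simp only [coe_basisMonomials, monomial_one_right_eq_X_pow]
    exact h n

theorem Dop_apply_X_pow_succ (n : ℕ) : Dop (X ^ (n + 1)) = ((n : ℂ) + 1) • X ^ n := by
  simp [Dop, smul_eq_C_mul]

theorem Mz_mul_Dop_apply_X_pow (n : ℕ) : (Mz * Dop) (X ^ n) = (n : ℂ) • X ^ n := by
  rcases n with _ | n
  · simp [Dop, Mz]
  · rw [Module.End.mul_apply, Dop_apply_X_pow_succ, map_smul]
    simp [Mz, ← pow_succ']

section RaisingOperator

variable {a : ℂ} {F : E}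

theorem pow_apply_X_pow (hF : ∀ n : ℕ, F (X ^ n) = ((n : ℂ) + a)⁻¹ • X ^ (n + 1)) (m n : ℕ) :
    (F ^ m) (X ^ n) = (∏ i ∈ Finset.range m, ((n : ℂ) + a + i))⁻¹ • X ^ (n + m) := by
  induction m with
  | zero => simp
  | succ m ih =>
    rw [pow_succ', Module.End.mul_apply, ih, map_smul, hF, smul_smul, Finset.prod_range_succ,
      mul_inv, ← add_assoc]
    push_cast
    ring_nf

theorem commutator_Mz_mul_Dop_sq_add_smul_Dop_eq_one (ha : ∀ n : ℕ, (n : ℂ) + a ≠ 0)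
    (hF : ∀ n : ℕ, F (X ^ n) = ((n : ℂ) + a)⁻¹ • X ^ (n + 1)) :
    (Mz * Dop ^ 2 + a • Dop) * F - F * (Mz * Dop ^ 2 + a • Dop) = 1 := by
  have hL : Mz * Dop ^ 2 + a • Dop = (Mz * Dop + a • 1) * Dop := by
    rw [add_mul, smul_one_mul, pow_two, mul_assoc]
  rw [hL]
  generalize hL₁ : (Mz * Dop + a • 1) * Dop = L₁
  have hL₁_succ (n : ℕ) : L₁ (X ^ (n + 1)) = (((n : ℂ) + 1) * (n + a)) • X ^ n := by
    rw [← hL₁, Module.End.mul_apply, Dop_apply_X_pow_succ, map_smul, LinearMap.add_apply,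
      Mz_mul_Dop_apply_X_pow]
    simp only [LinearMap.smul_apply, Module.End.one_apply, ← add_smul, smul_smul]
  refine linearMap_ext_X_pow fun n => ?_
  rw [LinearMap.sub_apply, Module.End.mul_apply, Module.End.mul_apply, hF, map_smul, hL₁_succ,
    smul_smul, Module.End.one_apply]
  rcases n with _ | n
  · have hL₁_zero : L₁ (X ^ 0) = 0 := by simp [← hL₁, Dop]
    rw [hL₁_zero, map_zero, sub_zero]
    match_scalars
    simp [by simpa using ha 0]
  · have h₀ := ha n
    have h₁ := ha (n + 1)
    push_cast at h₁
    rw [hL₁_succ, map_smul, hF, smul_smul]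
    match_scalars
    field_simp
    ring

theorem commutator_eq_pow_of_apply_X_pow (ha : ∀ n : ℕ, (n : ℂ) + a ≠ 0)
    (hF : ∀ n : ℕ, F (X ^ n) = ((n : ℂ) + a)⁻¹ • X ^ (n + 1)) {k : ℕ} {β : ℂ} {L : E}
    (hL : ∀ n : ℕ, L (X ^ n) =
      (((n : ℂ) + β) / ∏ i ∈ Finset.range k, ((n : ℂ) + a + i)) • X ^ (n + k)) :
    L * F - F * L = F ^ (k + 1) := by
  refine linearMap_ext_X_pow fun n => ?_
  rw [LinearMap.sub_apply, Module.End.mul_apply, Module.End.mul_apply, hF, map_smul, hL, hL,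
    map_smul, hF, pow_apply_X_pow hF, smul_smul, smul_smul,
    show n + 1 + k = n + (k + 1) by omega, show n + k + 1 = n + (k + 1) by omega, ← sub_smul,
    Finset.prod_range_succ]
  congr 1
  have hP : ∏ i ∈ Finset.range k, ((n : ℂ) + a + i) ≠ 0 :=
    Finset.prod_ne_zero_iff.2 fun i _ => by simpa [add_right_comm] using ha (n + i)
  have hQ : ∏ i ∈ Finset.range k, ((n : ℂ) + 1 + a + i) ≠ 0 :=
    Finset.prod_ne_zero_iff.2 fun i _ => by simpa [add_right_comm] using ha (n + 1 + i)
  have hPQ : (∏ i ∈ Finset.range k, ((n : ℂ) + a + i)) * ((n : ℂ) + a + k)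
      = ((n : ℂ) + a) * ∏ i ∈ Finset.range k, ((n : ℂ) + 1 + a + i) := by
    rw [← Finset.prod_range_succ, Finset.prod_range_succ', mul_comm]
    push_cast
    congr 1
    · ring
    · exact Finset.prod_congr rfl fun i _ => by ring
  have hnk : (n : ℂ) + a + k ≠ 0 := by simpa [add_right_comm] using ha (n + k)
  push_cast
  rw [add_right_comm (n : ℂ) k a]
  field_simp [ha n]
  linear_combination ((n : ℂ) + 1 + β) * hPQ

end RaisingOperator

/-- For nondegenerate extremal weight `h`, for every `n ≥ −1` (written
`n = m − 1`, `m ∈ ℕ`) and every polynomial `f`, `[L₋ₙ, f(F)] = F^{n+1}∘f'(F)`. -/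
theorem stmt_10 (h : ℝ) (hh : ∀ k : ℕ, h ≠ -(k : ℝ) / 2)
    (F : E) (hF : ∀ n : ℕ, F (X ^ n) = (((n : ℂ) + 2 * h)⁻¹) • X ^ (n + 1))
    (L : ℤ → E)
    (hLpos : ∀ k : ℕ, L (k : ℤ) = Mz * Dop ^ (k + 1) + (((k : ℂ) + 1) * (h : ℂ)) • Dop ^ k)
    (hLneg : ∀ k : ℕ, 1 ≤ k → ∀ n : ℕ,
      L (-(k : ℤ)) (X ^ n) =
        (((n : ℂ) + ((k : ℂ) + 1) * (h : ℂ)) /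
            ∏ i ∈ Finset.range k, ((n : ℂ) + 2 * h + (i : ℂ))) • X ^ (n + k))
    :
    ∀ m : ℕ, ∀ f : Polynomial ℂ,
      opComm (L (1 - (m : ℤ))) (Polynomial.aeval F f) =
        F ^ m * Polynomial.aeval F (derivative f) := by
  intro m f
  have ha (n : ℕ) : (n : ℂ) + 2 * h ≠ 0 := by
    intro hn
    apply hh n
    have : (n : ℝ) + 2 * h = 0 := by exact_mod_cast hn
    linarith
  have hcomm : L (1 - m) * F - F * L (1 - m) = F ^ m := by
    rcases m with _ | _ | k
    · have h2h : (((1 : ℕ) : ℂ) + 1) * h = 2 * h := by push_cast; ring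
      rw [show (1 : ℤ) - ((0 : ℕ) : ℤ) = ((1 : ℕ) : ℤ) by norm_num, hLpos 1, h2h, pow_one, pow_zero]
      exact commutator_Mz_mul_Dop_sq_add_smul_Dop_eq_one ha hF
    · rw [show (1 : ℤ) - ((0 + 1 : ℕ) : ℤ) = ((0 : ℕ) : ℤ) by norm_num, hLpos 0]
      refine commutator_eq_pow_of_apply_X_pow (k := 0) (β := h) ha hF fun n => ?_
      rw [LinearMap.add_apply, zero_add, pow_one, Mz_mul_Dop_apply_X_pow]
      simp [add_smul]
    · simpa [sub_add_eq_sub_sub] using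
        commutator_eq_pow_of_apply_X_pow ha hF (hLneg (k + 1) k.succ_pos)
  rw [opComm, commutator_aeval_eq_mul_aeval_derivative (hcomm ▸ Commute.self_pow F m), hcomm]

end
end

section
/- For h = 1 and for h = 1/2, the HS-projective representation of the Witt algebra by q_R-conformal symmetries is FR-projective: for all n, m ∈ ℤ, the defect operator [L_n, L_m] − (n − m)·L_{n+m} on ℂ[z] has finite rank, i.e. its range is a finite-dimensional subspace of ℂ[z]. -/
open Polynomial

noncomputable section

/-! On monomials, `L_j zᴺ = (φ N / φ (N - j)) (N + h - h j) zᴺ⁻ʲ` for `j ≤ N`, where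
`φ N = (2h)_N` is the rising factorial: for `j < 0` this holds for every `h > 0`, and for
`j = k ≥ 0`, `N = M + k` it amounts to `(2h + M)_k (M + k + h - h k) = (M + 1)_k (M + h + h k)`,
which is true for `2h ∈ {1, 2}`. The operators `e_N ↦ (N + α + β j) e_{N-j}` satisfy the Witt
relations exactly, and rescaling the basis by `φ` preserves this, so the defect
`[L_n, L_m] - (n - m) L_{n+m}` vanishes on every `zᴺ` with `N ≥ |n| + |m|`. -/

section WeightedShift

variable {K : Type*} [Field K]

theorem Polynomial.finiteDimensional_range_of_apply_X_pow_eq_zero (T : Module.End K K[X])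
    (N₀ : ℕ) (hT : ∀ N, N₀ ≤ N → T (X ^ N) = 0) : FiniteDimensional K (LinearMap.range T) := by
  have := FiniteDimensional.span_of_finite K ((Set.finite_Iio N₀).image fun i => T (X ^ i))
  refine Submodule.finiteDimensional_of_le
    (S₂ := Submodule.span K ((fun i => T (X ^ i)) '' Set.Iio N₀)) ?_
  rintro _ ⟨p, rfl⟩
  induction p using Polynomial.induction_on' with
  | add p q hp hq => rw [map_add]; exact add_mem hp hq
  | monomial i a =>
    rw [← smul_X_eq_monomial, map_smul]
    refine Submodule.smul_mem _ _ ?_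
    by_cases hi : i < N₀
    · exact Submodule.subset_span ⟨i, hi, rfl⟩
    · rw [hT i (not_lt.mp hi)]; exact zero_mem _

def shiftCoeff (φ : ℕ → K) (α β : K) (j : ℤ) (N : ℕ) : K :=
  φ N / φ (N - j).toNat * (N + α + β * j)

theorem shiftCoeff_witt {φ : ℕ → K} (hφ : ∀ N, φ N ≠ 0) (α β : K) {n m : ℤ} {N : ℕ}
    (hn : n ≤ N) (hm : m ≤ N) (hnm : n + m ≤ N) :
    shiftCoeff φ α β m N * shiftCoeff φ α β n (N - m).toNat
      - shiftCoeff φ α β n N * shiftCoeff φ α β m (N - n).toNat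
      = (n - m) * shiftCoeff φ α β (n + m) N := by
  have hA : (((N - m).toNat : ℤ) - n).toNat = (N - (n + m)).toNat := by omega
  have hC : (((N - n).toNat : ℤ) - m).toNat = (N - (n + m)).toNat := by omega
  have hAc : ((N - m).toNat : K) = N - m := by
    exact_mod_cast congrArg (Int.cast : ℤ → K) (Int.toNat_of_nonneg (by omega : 0 ≤ (N:ℤ) - m))
  have hCc : ((N - n).toNat : K) = N - n := by
    exact_mod_cast congrArg (Int.cast : ℤ → K) (Int.toNat_of_nonneg (by omega : 0 ≤ (N:ℤ) - n))
  have := hφ N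
  have := hφ (N - m).toNat
  have := hφ (N - n).toNat
  have := hφ (N - (n + m)).toNat
  simp only [shiftCoeff, hA, hC, hAc, hCc]
  push_cast
  field_simp
  ring

theorem finiteDimensional_range_witt_defect (L : ℤ → Module.End K K[X]) {φ : ℕ → K}
    (hφ : ∀ N, φ N ≠ 0) (α β : K)
    (hL : ∀ (j : ℤ) (N : ℕ), j ≤ N → L j (X ^ N) = shiftCoeff φ α β j N • X ^ (N - j).toNat)
    (n m : ℤ) :
    FiniteDimensional K
      (LinearMap.range (L n * L m - L m * L n - ((n - m : ℤ) : K) • L (n + m))) := by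
  refine finiteDimensional_range_of_apply_X_pow_eq_zero _ (n.natAbs + m.natAbs) fun N hN => ?_
  have hLn : L n (X ^ (N - m).toNat)
      = shiftCoeff φ α β n (N - m).toNat • X ^ (N - (n + m)).toNat := by
    rw [hL n _ (by omega)]; congr 3; omega
  have hLm : L m (X ^ (N - n).toNat)
      = shiftCoeff φ α β m (N - n).toNat • X ^ (N - (n + m)).toNat := by
    rw [hL m _ (by omega)]; congr 3; omega
  simp only [LinearMap.sub_apply, LinearMap.smul_apply, Module.End.mul_apply, hL m N (by omega),
    hL n N (by omega), hL (n + m) N (by omega), map_smul, hLn, hLm, smul_smul, ← sub_smul]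
  rw [shiftCoeff_witt hφ α β (by omega) (by omega) (by omega)]
  push_cast
  rw [sub_self, zero_smul]

end WeightedShift

theorem ascPochhammer_eval_eq_prod_range {R : Type*} [CommSemiring R] (a : R) (k : ℕ) :
    (ascPochhammer R k).eval a = ∏ i ∈ Finset.range k, (a + i) := by
  induction k with
  | zero => simp
  | succ k ih => rw [ascPochhammer_succ_eval, ih, Finset.prod_range_succ]

theorem ascPochhammer_eval_add_nat {R : Type*} [CommSemiring R] (a : R) (n k : ℕ) :
    (ascPochhammer R (n + k)).eval a
      = (ascPochhammer R n).eval a * (ascPochhammer R k).eval (a + n) := by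
  rw [← ascPochhammer_mul, eval_mul, eval_comp, eval_add, eval_X, eval_natCast]

theorem Mz_mul_Dop_X_pow (M : ℕ) : (Mz * Dop) (X ^ M) = (M : ℂ) • X ^ M := by
  rcases M with _ | M
  · simp [Dop]
  · change X * derivative (X ^ (M + 1)) = _
    rw [derivative_X_pow, Nat.add_sub_cancel, smul_eq_C_mul, pow_succ']
    push_cast
    ring

theorem Dop_pow_X_pow_add (M k : ℕ) :
    (Dop ^ k) (X ^ (M + k)) = (ascPochhammer ℂ k).eval (M + 1 : ℂ) • X ^ M := by
  rw [Module.End.pow_apply, Dop, iterate_derivative_X_pow_eq_smul,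
    Nat.add_descFactorial_eq_ascFactorial, Nat.cast_ascFactorial, Nat.add_sub_cancel]
  push_cast; rfl

section Verma

variable (h : ℝ) (L : ℤ → E)

def pochhammerWeight (N : ℕ) : ℂ := (ascPochhammer ℂ N).eval (2 * h : ℂ)

theorem pochhammerWeight_ne_zero (hpos : 0 < h) (N : ℕ) : pochhammerWeight h N ≠ 0 := by
  rw [pochhammerWeight, ascPochhammer_eval_eq_prod_range, Finset.prod_ne_zero_iff]
  intro i _
  exact_mod_cast (by positivity : (2 * h + i : ℝ) ≠ 0)

theorem apply_natCast_X_pow_add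
    (hLpos : ∀ k : ℕ, L (k : ℤ) = Mz * Dop ^ (k + 1) + (((k : ℂ) + 1) * (h : ℂ)) • Dop ^ k)
    (M k : ℕ) :
    L k (X ^ (M + k)) = ((M + (k + 1) * h) * (ascPochhammer ℂ k).eval (M + 1 : ℂ)) • X ^ M := by
  rw [hLpos, pow_succ', ← mul_assoc, LinearMap.add_apply, LinearMap.smul_apply,
    Module.End.mul_apply, Dop_pow_X_pow_add, map_smul, Mz_mul_Dop_X_pow, smul_smul, smul_smul,
    ← add_smul]
  congr 1; ring

theorem ascPochhammer_eval_two_mul_add_mul (hh : h = 1 ∨ h = 1 / 2) (M k : ℕ) :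
    (ascPochhammer ℂ k).eval (2 * h + M : ℂ) * (M + k + h - h * k)
      = (ascPochhammer ℂ k).eval (M + 1 : ℂ) * (M + (k + 1) * h) := by
  rcases hh with rfl | rfl
  · have := ascPochhammer_eval_succ ℂ k (M + 1)
    rw [show (2 * ((1 : ℝ) : ℂ) + M : ℂ) = M + 1 + 1 by push_cast; ring]
    push_cast at this ⊢
    linear_combination this
  · rw [show (2 * ((1 / 2 : ℝ) : ℂ) + M : ℂ) = M + 1 by push_cast; ring]
    push_cast
    ring

theorem pochhammerWeight_add (M k : ℕ) :
    pochhammerWeight h (M + k) = pochhammerWeight h M * (ascPochhammer ℂ k).eval (2 * h + M : ℂ) :=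
  ascPochhammer_eval_add_nat _ M k

theorem shiftCoeff_pochhammerWeight_natCast (hh : h = 1 ∨ h = 1 / 2) (M k : ℕ) :
    shiftCoeff (pochhammerWeight h) h (-h) k (M + k)
      = (M + (k + 1) * h) * (ascPochhammer ℂ k).eval (M + 1 : ℂ) := by
  have hpos : 0 < h := by rcases hh with rfl | rfl <;> norm_num
  rw [shiftCoeff, show ((M + k : ℕ) - (k : ℤ)).toNat = M by omega, pochhammerWeight_add,
    mul_div_cancel_left₀ _ (pochhammerWeight_ne_zero h hpos M)]
  push_cast
  linear_combination ascPochhammer_eval_two_mul_add_mul h hh M k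

theorem shiftCoeff_pochhammerWeight_neg (hpos : 0 < h) (N k : ℕ) :
    shiftCoeff (pochhammerWeight h) h (-h) (-k) N
      = (N + (k + 1) * h) / ∏ i ∈ Finset.range k, ((N : ℂ) + 2 * h + i) := by
  rw [shiftCoeff, show ((N : ℤ) - -(k : ℤ)).toNat = N + k by omega, pochhammerWeight_add,
    div_mul_cancel_left₀ (pochhammerWeight_ne_zero h hpos N), inv_mul_eq_div,
    ascPochhammer_eval_eq_prod_range]
  push_cast
  congr 1
  · ring
  · exact Finset.prod_congr rfl fun i _ => by ring

theorem apply_X_pow_eq_shiftCoeff (hh : h = 1 ∨ h = 1 / 2)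
    (hLpos : ∀ k : ℕ, L (k : ℤ) = Mz * Dop ^ (k + 1) + (((k : ℂ) + 1) * (h : ℂ)) • Dop ^ k)
    (hLneg : ∀ k : ℕ, 1 ≤ k → ∀ n : ℕ,
      L (-(k : ℤ)) (X ^ n) =
        (((n : ℂ) + ((k : ℂ) + 1) * (h : ℂ)) /
            ∏ i ∈ Finset.range k, ((n : ℂ) + 2 * h + (i : ℂ))) • X ^ (n + k))
    (j : ℤ) (N : ℕ) (hj : j ≤ N) :
    L j (X ^ N) = shiftCoeff (pochhammerWeight h) h (-h) j N • X ^ (N - j).toNat := by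
  rcases le_or_gt 0 j with hj0 | hj0
  · obtain ⟨k, rfl⟩ := Int.eq_ofNat_of_zero_le hj0
    obtain ⟨M, rfl⟩ : ∃ M, N = M + k := ⟨N - k, by omega⟩
    rw [shiftCoeff_pochhammerWeight_natCast h hh, apply_natCast_X_pow_add h L hLpos,
      show ((M + k : ℕ) - (k : ℤ)).toNat = M by omega]
  · obtain ⟨k, rfl⟩ := Int.exists_eq_neg_ofNat hj0.le
    have hpos : 0 < h := by rcases hh with rfl | rfl <;> norm_num
    rw [hLneg k (by omega), shiftCoeff_pochhammerWeight_neg h hpos,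
      show ((N : ℤ) - -(k : ℤ)).toNat = N + k by omega]

end Verma

/-- For `h = 1` or `h = 1/2`, the HS-projective representation of the Witt
algebra by q_R-conformal symmetries is FR-projective: each defect operator
`[Lₙ, Lₘ] − (n − m)·L_{n+m}` has finite rank (finite-dimensional range). -/
theorem stmt_14 (h : ℝ) (hh : h = 1 ∨ h = 1 / 2)
    (L : ℤ → E)
    (hLpos : ∀ k : ℕ, L (k : ℤ) = Mz * Dop ^ (k + 1) + (((k : ℂ) + 1) * (h : ℂ)) • Dop ^ k)
    (hLneg : ∀ k : ℕ, 1 ≤ k → ∀ n : ℕ,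
      L (-(k : ℤ)) (X ^ n) =
        (((n : ℂ) + ((k : ℂ) + 1) * (h : ℂ)) /
            ∏ i ∈ Finset.range k, ((n : ℂ) + 2 * h + (i : ℂ))) • X ^ (n + k))
    :
    ∀ n m : ℤ,
      FiniteDimensional ℂ
        (LinearMap.range (opComm (L n) (L m) - ((n - m : ℤ) : ℂ) • L (n + m))) := by
  have hpos : 0 < h := by rcases hh with rfl | rfl <;> norm_num
  exact finiteDimensional_range_witt_defect L (pochhammerWeight_ne_zero h hpos) h (-h)
    (apply_X_pow_eq_shiftCoeff h L hh hLpos hLneg)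

end
end

section
/- Let h > 0. Then the commutator [L₂, L₋₂] acts diagonally on the monomial basis of ℂ[z]: for every integer n ≥ 2, [L₂, L₋₂](zⁿ) = λ_n(h)·zⁿ with λ_n(h) = (n+3h)²(n+1)(n+2)/((n+2h)(n+2h+1)) − (n+3h−2)²·n·(n−1)/((n+2h−1)(n+2h−2)), while for n ∈ {0, 1} one has [L₂, L₋₂](zⁿ) = ((n+3h)²(n+1)(n+2)/((n+2h)(n+2h+1)))·zⁿ (the second summand being absent). -/
/-!
Since `Dᵏ zⁿ = n(n-1)⋯(n-k+1) zⁿ⁻ᵏ`, the operator `z·D³ + 3h·D²` sends `zⁿ⁺²` to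
`(n+2)(n+1)(n+3h) zⁿ` and kills `1` and `z`, while `L₋₂` multiplies `zⁿ` by an explicit scalar
and raises the degree by two. Both composites in `[L₂, L₋₂]` therefore map `zⁿ` to a multiple of
`zⁿ`, and `λₙ(h)` is the difference of the two products of scalars.
-/

open Polynomial

noncomputable section

/-- With `c = (k+1)h` this is the paper's `L_k`. -/
def lowering (k : ℕ) (c : ℂ) : E := Mz * Dop ^ (k + 1) + c • Dop ^ k

lemma opComm_apply (A B : E) (p : ℂ[X]) : opComm A B p = A (B p) - B (A p) := rfl

lemma Dop_pow_apply_X_pow (k n : ℕ) :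
    (Dop ^ k) (X ^ n : ℂ[X]) = (n.descFactorial k : ℂ) • X ^ (n - k) := by
  rw [Module.End.pow_apply, Dop, iterate_derivative_X_pow_eq_smul]

lemma lowering_apply_X_pow_add (k n : ℕ) (c : ℂ) :
    lowering k c (X ^ (n + k)) = (((n + k).descFactorial k : ℂ) * (n + c)) • X ^ n := by
  rw [lowering, LinearMap.add_apply, Module.End.mul_apply, LinearMap.smul_apply,
    Dop_pow_apply_X_pow, Dop_pow_apply_X_pow, map_smul, Mz, LinearMap.mulLeft_apply,
    Nat.descFactorial_succ, Nat.add_sub_cancel, smul_smul]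
  rcases n with _ | n
  · simp [mul_comm]
  · rw [← pow_succ', show n + 1 + k - (k + 1) + 1 = n + 1 by omega, ← add_smul]
    congr 1
    push_cast
    ring

lemma lowering_apply_X_pow_of_lt {k n : ℕ} (c : ℂ) (hn : n < k) : lowering k c (X ^ n) = 0 := by
  rw [lowering, LinearMap.add_apply, Module.End.mul_apply, LinearMap.smul_apply,
    Dop_pow_apply_X_pow, Dop_pow_apply_X_pow, Nat.descFactorial_eq_zero_iff_lt.mpr hn,
    Nat.descFactorial_eq_zero_iff_lt.mpr (hn.trans k.lt_succ_self)]
  simp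

theorem stmt_16_general (h : ℝ)
    (L2 : E) (hL2 : L2 = Mz * Dop ^ 3 + ((3 * h : ℝ) : ℂ) • Dop ^ 2)
    (Lm2 : E) (hLm2 : ∀ n : ℕ,
      Lm2 (X ^ n) =
        (((n : ℂ) + 3 * h) / (((n : ℂ) + 2 * h) * ((n : ℂ) + 2 * h + 1))) • X ^ (n + 2)) :
    (∀ n : ℕ, 2 ≤ n →
      opComm L2 Lm2 (X ^ n) =
        (((n : ℂ) + 3 * h) ^ 2 * ((n : ℂ) + 1) * ((n : ℂ) + 2) /
            (((n : ℂ) + 2 * h) * ((n : ℂ) + 2 * h + 1)) -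
          ((n : ℂ) + 3 * h - 2) ^ 2 * (n : ℂ) * ((n : ℂ) - 1) /
            (((n : ℂ) + 2 * h - 1) * ((n : ℂ) + 2 * h - 2))) • X ^ n) ∧
    (∀ n : ℕ, n = 0 ∨ n = 1 →
      opComm L2 Lm2 (X ^ n) =
        (((n : ℂ) + 3 * h) ^ 2 * ((n : ℂ) + 1) * ((n : ℂ) + 2) /
            (((n : ℂ) + 2 * h) * ((n : ℂ) + 2 * h + 1))) • X ^ n) := by
  replace hL2 : L2 = lowering 2 ((3 * h : ℝ) : ℂ) := hL2
  have hL2_apply (m : ℕ) :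
      L2 (X ^ (m + 2)) = (((m : ℂ) + 2) * (m + 1) * (m + 3 * h)) • X ^ m := by
    rw [hL2, lowering_apply_X_pow_add, Nat.succ_descFactorial_succ, Nat.succ_descFactorial_succ,
      Nat.descFactorial_zero, mul_one]
    congr 1
    push_cast
    ring
  refine ⟨fun n hn => ?_, fun n hn => ?_⟩
  · obtain ⟨m, rfl⟩ := Nat.exists_eq_add_of_le' hn
    rw [opComm_apply, hLm2, map_smul, hL2_apply, hL2_apply, map_smul, hLm2, smul_smul,
      smul_smul, ← sub_smul]
    congr 1
    push_cast
    -- `(n+2h-1)(n+2h-2)` is the denominator `(m+2h)(m+2h+1)` of `L₋₂ zᵐ`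
    ring
  · have hn2 : n < 2 := by omega
    rw [opComm_apply, hL2, lowering_apply_X_pow_of_lt _ hn2, map_zero, sub_zero, hLm2, map_smul,
      ← hL2, hL2_apply, smul_smul]
    congr 1
    ring

/-- For `h > 0`, the commutator `[L₂, L₋₂]` acts diagonally on the monomial
basis: for `n ≥ 2`, `[L₂,L₋₂](zⁿ) = λₙ(h)·zⁿ` with
`λₙ(h) = (n+3h)²(n+1)(n+2)/((n+2h)(n+2h+1)) − (n+3h−2)²n(n−1)/((n+2h−1)(n+2h−2))`,
while for `n ∈ {0,1}` only the first summand occurs. -/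
theorem stmt_16 (h : ℝ) (hpos : 0 < h)
    (L2 : E) (hL2 : L2 = Mz * Dop ^ 3 + ((3 * h : ℝ) : ℂ) • Dop ^ 2)
    (Lm2 : E) (hLm2 : ∀ n : ℕ,
      Lm2 (X ^ n) =
        (((n : ℂ) + 3 * h) / (((n : ℂ) + 2 * h) * ((n : ℂ) + 2 * h + 1))) • X ^ (n + 2)) :
    (∀ n : ℕ, 2 ≤ n →
      opComm L2 Lm2 (X ^ n) =
        (((n : ℂ) + 3 * h) ^ 2 * ((n : ℂ) + 1) * ((n : ℂ) + 2) /
            (((n : ℂ) + 2 * h) * ((n : ℂ) + 2 * h + 1)) -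
          ((n : ℂ) + 3 * h - 2) ^ 2 * (n : ℂ) * ((n : ℂ) - 1) /
            (((n : ℂ) + 2 * h - 1) * ((n : ℂ) + 2 * h - 2))) • X ^ n) ∧
    (∀ n : ℕ, n = 0 ∨ n = 1 →
      opComm L2 Lm2 (X ^ n) =
        (((n : ℂ) + 3 * h) ^ 2 * ((n : ℂ) + 1) * ((n : ℂ) + 2) /
            (((n : ℂ) + 2 * h) * ((n : ℂ) + 2 * h + 1))) • X ^ n) :=
  stmt_16_general h L2 hL2 Lm2 hLm2

end
end
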